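/- arXiv:1706.02526 — 9 statements merged into one kernel-verified Lean document; each statement's English description precedes it below -/
import Mathlib

section
/- Let L be a complete distributive lattice embedded (as a sublattice closed under the embedding) into a Boolean algebra B, and define the approximation ⌊ℓ⌋ = ⨆{ℓ' ∈ L | ℓ' ≤ ℓ} for ℓ ∈ B. Then for all ℓ, m ∈ B, ⌊ℓ ⊓ m⌋ = ⌊ℓ⌋ ⊓ ⌊m⌋. -/
/-!
Every element of `L` below `ℓ ⊓ m` lies below both `⌊ℓ⌋` and `⌊m⌋`. Conversely, by infinite
distributivity `⌊ℓ⌋ ⊓ ⌊m⌋` is the join of the meets `a ⊓ b` with `a, b ∈ L`, `a ≤ ℓ`, `b ≤ m`, and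
each such meet is an element of `L` below `ℓ ⊓ m`.
-/

section

variable {α : Type*}

def lowerApprox [CompleteLattice α] (L : Set α) (a : α) : α :=
  sSup {x | x ∈ L ∧ x ≤ a}

theorem lowerApprox_mono [CompleteLattice α] (L : Set α) : Monotone (lowerApprox L) :=
  fun _ _ hab => sSup_le_sSup fun _ hx => ⟨hx.1, hx.2.trans hab⟩

theorem inf_lowerApprox_le_lowerApprox_inf [Order.Frame α] {L : Set α}
    (hinf : ∀ x ∈ L, ∀ y ∈ L, x ⊓ y ∈ L) (a b : α) :
    lowerApprox L a ⊓ lowerApprox L b ≤ lowerApprox L (a ⊓ b) := by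
  rw [lowerApprox, lowerApprox, sSup_inf_sSup]
  exact iSup₂_le fun _ ⟨⟨hxL, hxa⟩, hyL, hyb⟩ => le_sSup ⟨hinf _ hxL _ hyL, inf_le_inf hxa hyb⟩

end

theorem approx_inf_general {B : Type*} [CompleteBooleanAlgebra B] (L : Set B)
    (hinf : ∀ x ∈ L, ∀ y ∈ L, x ⊓ y ∈ L)
    (ℓ m : B) :
    sSup {x | x ∈ L ∧ x ≤ ℓ ⊓ m} = sSup {x | x ∈ L ∧ x ≤ ℓ} ⊓ sSup {x | x ∈ L ∧ x ≤ m} :=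
  le_antisymm ((lowerApprox_mono L).map_inf_le ℓ m) (inf_lowerApprox_le_lowerApprox_inf hinf ℓ m)

/-- Approximation into a complete distributive sublattice `L` of a Boolean
algebra `B` commutes with binary meets: `⌊ℓ ⊓ m⌋ = ⌊ℓ⌋ ⊓ ⌊m⌋`. -/
theorem approx_inf {B : Type*} [CompleteBooleanAlgebra B] (L : Set B)
    (hinf : ∀ x ∈ L, ∀ y ∈ L, x ⊓ y ∈ L)
    (hsup : ∀ x ∈ L, ∀ y ∈ L, x ⊔ y ∈ L)
    (hSup : ∀ S ⊆ L, sSup S ∈ L)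
    (ℓ m : B) :
    sSup {x | x ∈ L ∧ x ≤ ℓ ⊓ m} = sSup {x | x ∈ L ∧ x ≤ ℓ} ⊓ sSup {x | x ∈ L ∧ x ≤ m} :=
  approx_inf_general L hinf ℓ m
end

section
/- Let L be a complete distributive lattice embedded into a Boolean algebra B with approximation ⌊·⌋. If ℓ, m ∈ L, then ⌊ℓ ⊔ ¬m⌋ = (m →_L ℓ), where →_L denotes the residuum (Heyting implication) in L and ¬ is Boolean complement in B. -/
theorem approx_sup_compl_eq_residuum_general {B : Type*} [CompleteBooleanAlgebra B] (L : Set B)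
    (ℓ m : B) :
    sSup {x | x ∈ L ∧ x ≤ ℓ ⊔ mᶜ} = sSup {x | x ∈ L ∧ m ⊓ x ≤ ℓ} := by
  simp_rw [← himp_eq, le_himp_iff, inf_comm]

/-- For `ℓ, m ∈ L`: the approximation of `ℓ ⊔ ¬m` equals the residuum
`m →_L ℓ = ⨆{x ∈ L | m ⊓ x ≤ ℓ}` in the lattice `L`. -/
theorem approx_sup_compl_eq_residuum {B : Type*} [CompleteBooleanAlgebra B] (L : Set B)
    (hinf : ∀ x ∈ L, ∀ y ∈ L, x ⊓ y ∈ L)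
    (hsup : ∀ x ∈ L, ∀ y ∈ L, x ⊔ y ∈ L)
    (hSup : ∀ S ⊆ L, sSup S ∈ L)
    (ℓ m : B) (hℓ : ℓ ∈ L) (hm : m ∈ L) :
    sSup {x | x ∈ L ∧ x ≤ ℓ ⊔ mᶜ} = sSup {x | x ∈ L ∧ m ⊓ x ≤ ℓ} :=
  approx_sup_compl_eq_residuum_general L ℓ m
end

section
/- Conditional transition systems over a finite poset (Φ, ≤) of conditions are in bijective correspondence with lattice transition systems over the lattice O(Φ) of downward-closed subsets of Φ: the maps f ↦ α with α(x,a,x') = {φ | x' ∈ f(x,a)(φ)} and α ↦ f with f(x,a)(φ) = {x' | φ ∈ α(x,a,x')} are mutually inverse, and α(x,a,x') is always downward-closed while f(x,a) is always antitone from (Φ,≤) to (P(X),⊆). -/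
/-- From a CTS transition function to a LaTS transition function. -/
def toLats {X A Φ : Type*} (f : X → A → Φ → Set X) : X → A → X → Set Φ :=
  fun x a x' => {φ | x' ∈ f x a φ}

/-- From a LaTS transition function to a CTS transition function. -/
def toCts {X A Φ : Type*} (α : X → A → X → Set Φ) : X → A → Φ → Set X :=
  fun x a φ => {x' | φ ∈ α x a x'}

section Translations

variable {X A Φ : Type*}

@[simp]
theorem toCts_toLats (f : X → A → Φ → Set X) : toCts (toLats f) = f := rfl

@[simp]
theorem toLats_toCts (α : X → A → X → Set Φ) : toLats (toCts α) = α := rfl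

variable [Preorder Φ]

theorem isLowerSet_toLats {f : X → A → Φ → Set X} {x : X} {a : A} (hf : Antitone (f x a))
    (x' : X) : IsLowerSet (toLats f x a x') :=
  fun _ _ hle hmem => hf hle hmem

theorem antitone_toCts {α : X → A → X → Set Φ} {x : X} {a : A}
    (hα : ∀ x', IsLowerSet (α x a x')) : Antitone (toCts α x a) :=
  fun _ _ hle x' hmem => hα x' hle hmem

end Translations

theorem cts_lats_correspondence_general {X A Φ : Type*} [PartialOrder Φ] :
    (∀ f : X → A → Φ → Set X, (∀ x a, Antitone (f x a)) →
      (∀ x a x', IsLowerSet (toLats f x a x')) ∧ toCts (toLats f) = f) ∧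
    (∀ α : X → A → X → Set Φ, (∀ x a x', IsLowerSet (α x a x')) →
      (∀ x a, Antitone (toCts α x a)) ∧ toLats (toCts α) = α) :=
  ⟨fun f hf => ⟨fun x a => isLowerSet_toLats (hf x a), toCts_toLats f⟩,
    fun α hα => ⟨fun x a => antitone_toCts (hα x a), toLats_toCts α⟩⟩

/-- CTSs over a finite poset `(Φ, ≤)` correspond bijectively to LaTSs over the
lattice of downward-closed subsets of `Φ`: the two translation maps are
mutually inverse, every `α(x,a,x')` obtained from a CTS is downward-closed, and
every `f(x,a)` obtained from a LaTS is antitone from `(Φ,≤)` to `(P(X),⊆)`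
(i.e. monotone into `(P(X),⊇)`). -/
theorem cts_lats_correspondence {X A Φ : Type*} [PartialOrder Φ] [Fintype Φ] :
    (∀ f : X → A → Φ → Set X, (∀ x a, Antitone (f x a)) →
      (∀ x a x', IsLowerSet (toLats f x a x')) ∧ toCts (toLats f) = f) ∧
    (∀ α : X → A → X → Set Φ, (∀ x a x', IsLowerSet (α x a x')) →
      (∀ x a, Antitone (toCts α x a)) ∧ toLats (toCts α) = α) :=
  cts_lats_correspondence_general
end

section
/- A conditional relation R : X × Y → L is a lattice bisimulation between two finite LaTSs if and only if R ≤ F(R), where F(R)(x,y) = F₁(R)(x,y) ⊓ F₂(R)(x,y), F₁(R)(x,y) = ⨅_{a,x'} (α(x,a,x') → ⨆_{y'} (β(y,a,y') ⊓ R(x',y'))), and F₂ is symmetric with α,β and x,y swapped; here → is the Heyting residuum in L. -/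
/-- `R` is a lattice bisimulation between the LaTSs `α` and `β`. -/
def IsLatticeBisim {X Y A L : Type*} [Lattice L]
    (α : X → A → X → L) (β : Y → A → Y → L) (R : X → Y → L) : Prop :=
  ∀ ℓ : L, SupIrred ℓ →
    (∀ x x' y a, ℓ ≤ α x a x' → ℓ ≤ R x y → ∃ y', ℓ ≤ β y a y' ∧ ℓ ≤ R x' y') ∧
    (∀ x y y' a, ℓ ≤ β y a y' → ℓ ≤ R x y → ∃ x', ℓ ≤ α x a x' ∧ ℓ ≤ R x' y')

/-- The fixpoint operator `F(R) = F₁(R) ⊓ F₂(R)`, where `⇨` is the Heyting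
residuum of `L`. -/
def Fop {X Y A L : Type*} [Fintype X] [Fintype Y] [Fintype A] [HeytingAlgebra L]
    (α : X → A → X → L) (β : Y → A → Y → L) (R : X → Y → L) : X → Y → L :=
  fun x y =>
    (Finset.univ.inf fun p : A × X =>
      α x p.1 p.2 ⇨ Finset.univ.sup fun y' : Y => β y p.1 y' ⊓ R p.2 y') ⊓
    (Finset.univ.inf fun p : A × Y =>
      β y p.1 p.2 ⇨ Finset.univ.sup fun x' : X => α x p.1 x' ⊓ R x' p.2)

/- In a distributive lattice sup-irreducibles are sup-prime, so below an irreducible `ℓ` the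
residuated condition `r ⊓ a ≤ ⨆ᵢ fᵢ` splits into the existence of a single witness `i`; and in a
well-founded lattice every element is a join of irreducibles, so testing on them loses nothing. -/

theorem le_iff_forall_supIrred_le {L : Type*} [Lattice L] [OrderBot L] [WellFoundedLT L]
    {a b : L} : a ≤ b ↔ ∀ ℓ : L, SupIrred ℓ → ℓ ≤ a → ℓ ≤ b := by
  refine ⟨fun h ℓ _ hℓ => hℓ.trans h, fun h => ?_⟩
  obtain ⟨s, rfl, hs⟩ := exists_supIrred_decomposition a
  exact Finset.sup_le fun c hc => h c (hs hc) (Finset.le_sup (f := id) hc)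

theorem le_himp_finset_sup_iff {L ι : Type*} [HeytingAlgebra L] [WellFoundedLT L]
    {r a : L} {s : Finset ι} {f : ι → L} :
    r ≤ a ⇨ s.sup f ↔ ∀ ℓ : L, SupIrred ℓ → ℓ ≤ a → ℓ ≤ r → ∃ i ∈ s, ℓ ≤ f i := by
  rw [le_himp_iff, le_iff_forall_supIrred_le]
  refine forall₂_congr fun ℓ hℓ => ?_
  rw [le_inf_iff, hℓ.supPrime.le_finset_sup, and_comm, and_imp]

/-- A conditional relation is a lattice bisimulation iff it is a post-fixpoint
of `F`. -/
theorem isLatticeBisim_iff_le_Fop {X Y A L : Type*}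
    [Fintype X] [Fintype Y] [Fintype A] [HeytingAlgebra L] [Fintype L]
    (α : X → A → X → L) (β : Y → A → Y → L) (R : X → Y → L) :
    IsLatticeBisim α β R ↔ ∀ x y, R x y ≤ Fop α β R x y := by
  simp only [Fop, le_inf_iff, Finset.le_inf_iff, le_himp_finset_sup_iff, Finset.mem_univ,
    true_and, forall_const, Prod.forall]
  constructor
  · intro h x y
    exact ⟨fun a x' ℓ hℓ hα hR => (h ℓ hℓ).1 x x' y a hα hR,
      fun a y' ℓ hℓ hβ hR => (h ℓ hℓ).2 x y y' a hβ hR⟩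
  · intro h ℓ hℓ
    exact ⟨fun x x' y a hα hR => (h x y).1 a x' ℓ hℓ hα hR,
      fun x y y' a hβ hR => (h x y).2 a y' ℓ hℓ hβ hR⟩
end

section
/- Let L be a finite distributive lattice embedded into the Boolean algebra B of subsets of its join-irreducibles, and let R : X×Y → L. Then ⌊F_B(R)⌋ = F_L(R), where F_B and F_L denote the fixpoint operator F computed using the residuum of B and of L respectively, and ⌊·⌋ denotes pointwise approximation into L. -/
/-- Approximation of `b ∈ B` into the sublattice `L`. -/
def approx {B : Type*} [CompleteBooleanAlgebra B] (L : Set B) (b : B) : B :=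
  sSup {x | x ∈ L ∧ x ≤ b}

/-- Residuum in the sublattice `L`: `m →_L ℓ = ⨆{x ∈ L | m ⊓ x ≤ ℓ}`. -/
def resL {B : Type*} [CompleteBooleanAlgebra B] (L : Set B) (m l : B) : B :=
  sSup {x | x ∈ L ∧ m ⊓ x ≤ l}

/-- The operator `F` computed with the Boolean residuum `m →_B ℓ = ¬m ⊔ ℓ`. -/
def FB {X Y A B : Type*} [CompleteBooleanAlgebra B]
    (α : X → A → X → B) (β : Y → A → Y → B) (R : X → Y → B) : X → Y → B :=
  fun x y =>
    (⨅ a, ⨅ x', (α x a x')ᶜ ⊔ ⨆ y', β y a y' ⊓ R x' y') ⊓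
    (⨅ a, ⨅ y', (β y a y')ᶜ ⊔ ⨆ x', α x a x' ⊓ R x' y')

/-- The operator `F` computed with the residuum of the sublattice `L`. -/
def FL {X Y A B : Type*} [CompleteBooleanAlgebra B] (L : Set B)
    (α : X → A → X → B) (β : Y → A → Y → B) (R : X → Y → B) : X → Y → B :=
  fun x y =>
    (⨅ a, ⨅ x', resL L (α x a x') (⨆ y', β y a y' ⊓ R x' y')) ⊓
    (⨅ a, ⨅ y', resL L (β y a y') (⨆ x', α x a x' ⊓ R x' y'))

/-!
Since `L` is closed under arbitrary joins, `approx L` is the interior operator of `B` onto `L`;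
since `L` is also closed under arbitrary meets, it commutes with all meets. Moreover
`x ≤ mᶜ ⊔ ℓ ↔ m ⊓ x ≤ ℓ`, so the residuum of `L` is the approximation of the Boolean residuum.
Approximating `F_B(R)` therefore pushes through the meets of `F` and turns each Boolean residuum
into the residuum of `L`.
-/

section Approx

variable {B : Type*} [CompleteBooleanAlgebra B] {L : Set B}

lemma approx_mem (hSup : ∀ S ⊆ L, sSup S ∈ L) (b : B) : approx L b ∈ L :=
  hSup _ fun _ hx => hx.1

lemma approx_le (b : B) : approx L b ≤ b :=
  sSup_le fun _ hx => hx.2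

lemma le_approx {x b : B} (hx : x ∈ L) (h : x ≤ b) : x ≤ approx L b :=
  le_sSup ⟨hx, h⟩

lemma approx_iInf {ι : Sort*} (hSup : ∀ S ⊆ L, sSup S ∈ L) (hInf : ∀ S ⊆ L, sInf S ∈ L)
    (f : ι → B) : approx L (⨅ i, f i) = ⨅ i, approx L (f i) := by
  have hmem : ⨅ i, approx L (f i) ∈ L := by
    rw [← sInf_range]
    exact hInf _ (Set.range_subset_iff.2 fun _ => approx_mem hSup _)
  refine le_antisymm ?_ ?_
  · exact le_iInf fun i => le_approx (approx_mem hSup _) ((approx_le _).trans (iInf_le _ i))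
  · exact le_approx hmem (iInf_mono fun _ => approx_le _)

lemma approx_inf_s11 (hSup : ∀ S ⊆ L, sSup S ∈ L) (hInf : ∀ S ⊆ L, sInf S ∈ L) (a b : B) :
    approx L (a ⊓ b) = approx L a ⊓ approx L b := by
  simpa only [iInf_bool_eq, cond] using approx_iInf hSup hInf fun i => cond i a b

lemma resL_eq_approx_compl_sup (m l : B) : resL L m l = approx L (mᶜ ⊔ l) := by
  simp only [resL, approx, sup_comm mᶜ, ← himp_eq, le_himp_iff, inf_comm m]

end Approx

theorem approx_FB_eq_FL_general {X Y A B : Type*} [CompleteBooleanAlgebra B] (L : Set B)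
    (hSup : ∀ S ⊆ L, sSup S ∈ L)
    (hInf : ∀ S ⊆ L, sInf S ∈ L)
    (α : X → A → X → B) (β : Y → A → Y → B) (R : X → Y → B) :
    ∀ x y, approx L (FB α β R x y) = FL L α β R x y := by
  intro x y
  simp only [FB, FL, approx_inf_s11 hSup hInf, approx_iInf hSup hInf, resL_eq_approx_compl_sup]

/-- For a conditional relation `R` with values in the sublattice `L`, the
approximation of `F_B(R)` equals `F_L(R)`. -/
theorem approx_FB_eq_FL {X Y A B : Type*} [CompleteBooleanAlgebra B] (L : Set B)
    (hinf : ∀ x ∈ L, ∀ y ∈ L, x ⊓ y ∈ L)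
    (hsup : ∀ x ∈ L, ∀ y ∈ L, x ⊔ y ∈ L)
    (hSup : ∀ S ⊆ L, sSup S ∈ L)
    (hInf : ∀ S ⊆ L, sInf S ∈ L)
    (α : X → A → X → B) (β : Y → A → Y → B) (R : X → Y → B)
    (hα : ∀ x a x', α x a x' ∈ L) (hβ : ∀ y a y', β y a y' ∈ L)
    (hR : ∀ x y, R x y ∈ L) :
    ∀ x y, approx L (FB α β R x y) = FL L α β R x y :=
  approx_FB_eq_FL_general L hSup hInf α β R
end

section
/- Every L-bisimulation is also a B-bisimulation: if R : X×Y → L satisfies R ≤ F_L(R), then R ≤ F_B(R), where L is a finite distributive lattice embedded into Boolean algebra B and F_L, F_B are the respective fixpoint operators. -/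
lemma resL_le_compl_sup {B : Type*} [CompleteBooleanAlgebra B] (L : Set B) (m l : B) :
    resL L m l ≤ mᶜ ⊔ l := by
  rw [sup_comm, ← himp_eq]
  exact sSup_le fun _ ⟨_, hx⟩ => le_himp_iff'.2 hx

lemma FL_le_FB {X Y A B : Type*} [CompleteBooleanAlgebra B] (L : Set B)
    (α : X → A → X → B) (β : Y → A → Y → B) (R : X → Y → B) :
    FL L α β R ≤ FB α β R := fun _ _ =>
  inf_le_inf (iInf₂_mono fun _ _ => resL_le_compl_sup L _ _)
    (iInf₂_mono fun _ _ => resL_le_compl_sup L _ _)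

theorem L_bisim_is_B_bisim_general {X Y A B : Type*} [CompleteBooleanAlgebra B] (L : Set B)
    (α : X → A → X → B) (β : Y → A → Y → B) (R : X → Y → B)
    (h : ∀ x y, R x y ≤ FL L α β R x y) :
    ∀ x y, R x y ≤ FB α β R x y :=
  fun x y => (h x y).trans (FL_le_FB L α β R x y)

/-- Every `L`-bisimulation is also a `B`-bisimulation: if `R ≤ F_L(R)` then
`R ≤ F_B(R)`. -/
theorem L_bisim_is_B_bisim {X Y A B : Type*} [CompleteBooleanAlgebra B] (L : Set B)
    (hinf : ∀ x ∈ L, ∀ y ∈ L, x ⊓ y ∈ L)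
    (hsup : ∀ x ∈ L, ∀ y ∈ L, x ⊔ y ∈ L)
    (hSup : ∀ S ⊆ L, sSup S ∈ L)
    (hInf : ∀ S ⊆ L, sInf S ∈ L)
    (α : X → A → X → B) (β : Y → A → Y → B) (R : X → Y → B)
    (hα : ∀ x a x', α x a x' ∈ L) (hβ : ∀ y a y', β y a y' ∈ L)
    (hR : ∀ x y, R x y ∈ L)
    (h : ∀ x y, R x y ≤ FL L α β R x y) :
    ∀ x y, R x y ≤ FB α β R x y :=
  L_bisim_is_B_bisim_general L α β R h
end

section
/- If R : X×Y → B is a B-bisimulation (R ≤ F_B(R)) all of whose entries lie in the sublattice L, then R is an L-bisimulation (R ≤ F_L(R)). -/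
theorem le_resL_of_le_compl_sup {B : Type*} [CompleteBooleanAlgebra B] {L : Set B} {m l r : B}
    (hr : r ∈ L) (h : r ≤ mᶜ ⊔ l) : r ≤ resL L m l :=
  le_sSup ⟨hr, le_himp_iff'.1 (by rwa [himp_eq, sup_comm])⟩

theorem le_FL_of_le_FB {X Y A B : Type*} [CompleteBooleanAlgebra B] {L : Set B}
    {α : X → A → X → B} {β : Y → A → Y → B} {R : X → Y → B} {x : X} {y : Y} {r : B}
    (hr : r ∈ L) (h : r ≤ FB α β R x y) : r ≤ FL L α β R x y := by
  obtain ⟨hforth, hback⟩ := le_inf_iff.1 h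
  refine le_inf (le_iInf₂ fun a x' => ?_) (le_iInf₂ fun a y' => ?_)
  · exact le_resL_of_le_compl_sup hr (hforth.trans ((iInf_le _ a).trans (iInf_le _ x')))
  · exact le_resL_of_le_compl_sup hr (hback.trans ((iInf_le _ a).trans (iInf_le _ y')))

theorem B_bisim_with_entries_in_L_is_L_bisim_general {X Y A B : Type*}
    [CompleteBooleanAlgebra B] (L : Set B)
    (α : X → A → X → B) (β : Y → A → Y → B) (R : X → Y → B)
    (hR : ∀ x y, R x y ∈ L)
    (h : ∀ x y, R x y ≤ FB α β R x y) :
    ∀ x y, R x y ≤ FL L α β R x y :=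
  fun x y => le_FL_of_le_FB (hR x y) (h x y)

/-- A `B`-bisimulation all of whose entries lie in `L` is an
`L`-bisimulation. -/
theorem B_bisim_with_entries_in_L_is_L_bisim {X Y A B : Type*}
    [CompleteBooleanAlgebra B] (L : Set B)
    (hinf : ∀ x ∈ L, ∀ y ∈ L, x ⊓ y ∈ L)
    (hsup : ∀ x ∈ L, ∀ y ∈ L, x ⊔ y ∈ L)
    (hSup : ∀ S ⊆ L, sSup S ∈ L)
    (hInf : ∀ S ⊆ L, sInf S ∈ L)
    (α : X → A → X → B) (β : Y → A → Y → B) (R : X → Y → B)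
    (hα : ∀ x a x', α x a x' ∈ L) (hβ : ∀ y a y', β y a y' ∈ L)
    (hR : ∀ x y, R x y ∈ L)
    (h : ∀ x y, R x y ≤ FB α β R x y) :
    ∀ x y, R x y ≤ FL L α β R x y :=
  B_bisim_with_entries_in_L_is_L_bisim_general L α β R hR h
end

section
/- For a conditional relation R between LaTSs (X,A,α) and (Y,A,β) over a finite distributive lattice, F(R) = ⨅_{a∈A} ((α_a ⊗ (R · β_aᵀ)) ⊓ (β_a ⊗ (α_a · R)ᵀ)ᵀ), where · is matrix multiplication over (⊔,⊓), U ⊗ V is defined by (U⊗V)(x,z) = ⨅_y (U(x,y) → V(y,z)) with → the Heyting residuum, and ᵀ is transposition. -/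
/-- Standard matrix multiplication over a lattice, using `⊔` for addition and
`⊓` for multiplication. -/
def mmul {X Y Z L : Type*} [Fintype Y] [Lattice L] [OrderBot L]
    (U : X → Y → L) (V : Y → Z → L) : X → Z → L :=
  fun x z => Finset.univ.sup fun y => U x y ⊓ V y z

/-- Residuated matrix multiplication: `(U ⊗ V)(x,z) = ⨅_y (U(x,y) ⇨ V(y,z))`. -/
def omul {X Y Z L : Type*} [Fintype Y] [HeytingAlgebra L]
    (U : X → Y → L) (V : Y → Z → L) : X → Z → L :=
  fun x z => Finset.univ.inf fun y => U x y ⇨ V y z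

/-- Matrix transposition. -/
def tr {X Y L : Type*} (M : X → Y → L) : Y → X → L := fun y x => M x y

theorem mmul_tr_apply {X Y Z L : Type*} [Fintype Y] [Lattice L] [OrderBot L]
    (U : X → Y → L) (V : Z → Y → L) (x : X) (z : Z) :
    mmul U (tr V) x z = Finset.univ.sup fun y => V z y ⊓ U x y :=
  Finset.sup_congr rfl fun _ _ => inf_comm _ _

theorem Fop_eq_matrix_form_general {X Y A L : Type*}
    [Fintype X] [Fintype Y] [Fintype A] [HeytingAlgebra L]
    (α : X → A → X → L) (β : Y → A → Y → L) (R : X → Y → L) :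
    ∀ x y, Fop α β R x y =
      Finset.univ.inf fun a : A =>
        omul (fun x x' => α x a x') (mmul R (tr (fun y y' => β y a y'))) x y ⊓
        tr (omul (fun y y' => β y a y') (tr (mmul (fun x x' => α x a x') R))) x y := by
  intro x y
  rw [Fop, ← Finset.univ_product_univ, Finset.inf_product_left, ← Finset.univ_product_univ,
    Finset.inf_product_left, ← Finset.inf_inf]
  simp only [omul, mmul_tr_apply, tr]
  rfl

/-- `F(R) = ⨅_a ((α_a ⊗ (R · β_aᵀ)) ⊓ (β_a ⊗ (α_a · R)ᵀ)ᵀ)`. -/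
theorem Fop_eq_matrix_form {X Y A L : Type*}
    [Fintype X] [Fintype Y] [Fintype A] [HeytingAlgebra L] [Fintype L]
    (α : X → A → X → L) (β : Y → A → Y → L) (R : X → Y → L) :
    ∀ x y, Fop α β R x y =
      Finset.univ.inf fun a : A =>
        omul (fun x x' => α x a x') (mmul R (tr (fun y y' => β y a y'))) x y ⊓
        tr (omul (fun y y' => β y a y') (tr (mmul (fun x x' => α x a x') R))) x y :=
  Fop_eq_matrix_form_general α β R
end

section
/- Let (X, α) be a LaTS over an atomic complete Boolean algebra B (with a singleton alphabet, so α : X×X → B, X finite). A conditional relation R : X×X → B is a lattice bisimulation for α if and only if R·α ≤ α·R and Rᵀ·α ≤ α·Rᵀ, where · is matrix multiplication over (⊔,⊓). -/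
/-!
Both sides can be tested atom by atom. An atom of a distributive lattice is sup-prime, so it lies
below the finite join `(M·N) x z = ⨆ y, M x y ⊓ N y z` exactly when it lies below `M x y` and
`N y z` for a single `y`; and in an atomistic lattice an inequality holds as soon as every atom
below the left side lies below the right side. Read through these two facts, `R·α ≤ α·R` is the
transfer condition for `Rᵀ` and `Rᵀ·α ≤ α·Rᵀ` is the transfer condition for `R`.
-/

theorem IsAtom.supPrime {α : Type*} [DistribLattice α] [OrderBot α] {a : α} (ha : IsAtom a) :
    SupPrime a := by
  refine ⟨fun hmin => ha.1 (isMin_iff_eq_bot.1 hmin), fun b c habc => ?_⟩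
  by_contra! hbc
  have hb : a ⊓ b = ⊥ := (ha.le_iff.1 inf_le_left).resolve_right fun h => hbc.1 (h ▸ inf_le_right)
  have hc : a ⊓ c = ⊥ := (ha.le_iff.1 inf_le_left).resolve_right fun h => hbc.2 (h ▸ inf_le_right)
  exact ha.1 <| calc
    a = a ⊓ (b ⊔ c) := (inf_eq_left.2 habc).symm
    _ = ⊥ := by rw [inf_sup_left, hb, hc, sup_bot_eq]

section SupInfMul

variable {X Y Z W B : Type*}

def supInfMul [Fintype Y] [Lattice B] [OrderBot B] (M : X → Y → B) (N : Y → Z → B) :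
    X → Z → B :=
  fun x z => Finset.univ.sup fun y => M x y ⊓ N y z

variable [DistribLattice B] [OrderBot B]

theorem IsAtom.le_supInfMul_iff [Fintype Y] {ℓ : B} (hℓ : IsAtom ℓ) {M : X → Y → B}
    {N : Y → Z → B} {x : X} {z : Z} :
    ℓ ≤ supInfMul M N x z ↔ ∃ y, ℓ ≤ M x y ∧ ℓ ≤ N y z := by
  simp only [supInfMul, hℓ.supPrime.le_finset_sup, Finset.mem_univ, true_and, le_inf_iff]

-- The right side is put in the shape of a transfer condition, which fixes its odd argument order.
theorem supInfMul_le_supInfMul_iff [IsAtomistic B] [Fintype Y] [Fintype W] {M : X → Y → B}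
    {N : Y → Z → B} {P : X → W → B} {Q : W → Z → B} :
    (∀ x z, supInfMul M N x z ≤ supInfMul P Q x z) ↔
      ∀ ℓ : B, IsAtom ℓ → ∀ y z x, ℓ ≤ N y z → ℓ ≤ M x y → ∃ w, ℓ ≤ P x w ∧ ℓ ≤ Q w z := by
  simp only [le_iff_atom_le_imp (a := supInfMul _ _ _ _)]
  constructor
  · intro h ℓ hℓ y z x hN hM
    exact hℓ.le_supInfMul_iff.1 (h x z ℓ hℓ (hℓ.le_supInfMul_iff.2 ⟨y, hM, hN⟩))
  · rintro h x z ℓ hℓ hMN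
    obtain ⟨y, hM, hN⟩ := hℓ.le_supInfMul_iff.1 hMN
    exact hℓ.le_supInfMul_iff.2 (h ℓ hℓ y z x hN hM)

end SupInfMul

/-- Fitting's characterisation: over an atomic complete Boolean algebra (with a
singleton alphabet), `R` is a lattice bisimulation for `α` iff
`R·α ≤ α·R` and `Rᵀ·α ≤ α·Rᵀ`. -/
theorem fitting_characterisation {X B : Type*} [Fintype X]
    [CompleteAtomicBooleanAlgebra B] (α R : X → X → B) :
    (∀ ℓ : B, IsAtom ℓ →
      (∀ x y x', ℓ ≤ α x y → ℓ ≤ R x x' → ∃ y', ℓ ≤ α x' y' ∧ ℓ ≤ R y y') ∧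
      (∀ x y x', ℓ ≤ α x y → ℓ ≤ R x' x → ∃ y', ℓ ≤ α x' y' ∧ ℓ ≤ R y' y)) ↔
    ((∀ x z, (Finset.univ.sup fun y => R x y ⊓ α y z) ≤
        Finset.univ.sup fun y => α x y ⊓ R y z) ∧
     (∀ x z, (Finset.univ.sup fun y => R y x ⊓ α y z) ≤
        Finset.univ.sup fun y => α x y ⊓ R z y)) := by
  simp only [forall_and]
  exact (and_congr supInfMul_le_supInfMul_iff supInfMul_le_supInfMul_iff).symm.trans and_comm
end
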